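/- A subset U of {x_{ij} : 1 ≤ i ≤ n, 1 ≤ j ≤ 3} is a face of the complex Δₙ if and only if U = B ∪ C where B contains at most one element x_{ij} for each i (i.e., B is independent in the direct sum of n copies of the rank-1 uniform matroid on 3 elements) and C has at most 3 elements (independent in the uniform matroid U_{3,3n}). Consequently Δₙ is a matroid of rank n+3, equal to the matroid union U_{3,3n} ∨ U_{1,3}^{⊕n}. -/

import Mathlib

open Finset

/-- The profile of a subset `U` of the ground set `{x_{ij}} = Fin n × Fin 3`:
`profile U i` is the number of `j` with `x_{ij} ∈ U`. -/
def profileOf {n : ℕ} (U : Finset (Fin n × Fin 3)) (i : Fin n) : ℕ :=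
  (U.filter (fun p => p.1 = i)).card

/-- A profile is *bad* if, up to permutation of the indices, it equals
`(3,3,0,…,0)`, `(3,2,2,0,…,0)` or `(2,2,2,2,0,…,0)`. -/
def IsBadProfile {n : ℕ} (c : Fin n → ℕ) : Prop :=
  (∃ i j, i ≠ j ∧ c i = 3 ∧ c j = 3 ∧ ∀ k, k ≠ i → k ≠ j → c k = 0) ∨
  (∃ i j k, i ≠ j ∧ i ≠ k ∧ j ≠ k ∧ c i = 3 ∧ c j = 2 ∧ c k = 2 ∧
    ∀ l, l ≠ i → l ≠ j → l ≠ k → c l = 0) ∨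
  (∃ i j k l, i ≠ j ∧ i ≠ k ∧ i ≠ l ∧ j ≠ k ∧ j ≠ l ∧ k ≠ l ∧
    c i = 2 ∧ c j = 2 ∧ c k = 2 ∧ c l = 2 ∧
    ∀ m, m ≠ i → m ≠ j → m ≠ k → m ≠ l → c m = 0)

/-- `U` is a face of the simplicial complex `Δₙ`: it contains no (minimal)
nonface, i.e. no subset whose profile is bad. -/
def IsFaceD (n : ℕ) (U : Finset (Fin n × Fin 3)) : Prop :=
  ¬ ∃ W : Finset (Fin n × Fin 3), W ⊆ U ∧ IsBadProfile (profileOf W)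

/-- `U` is a facet (maximal face) of `Δₙ`. -/
def IsFacetD (n : ℕ) (U : Finset (Fin n × Fin 3)) : Prop :=
  IsFaceD n U ∧ ∀ W : Finset (Fin n × Fin 3), IsFaceD n W → U ⊆ W → W = U

/-- A profile is a permutation of `(3,2,1,1,…,1)`. -/
def IsProfile321 {n : ℕ} (c : Fin n → ℕ) : Prop :=
  ∃ i j, i ≠ j ∧ c i = 3 ∧ c j = 2 ∧ ∀ k, k ≠ i → k ≠ j → c k = 1

/-- A profile is a permutation of `(2,2,2,1,…,1)`. -/
def IsProfile2221 {n : ℕ} (c : Fin n → ℕ) : Prop :=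
  ∃ i j k, i ≠ j ∧ i ≠ k ∧ j ≠ k ∧ c i = 2 ∧ c j = 2 ∧ c k = 2 ∧
    ∀ l, l ≠ i → l ≠ j → l ≠ k → c l = 1

/-- A matroid given by its family of independent finite sets. -/
structure FinMatroid (α : Type*) [DecidableEq α] where
  Indep : Finset α → Prop
  indep_empty : Indep ∅
  indep_subset : ∀ ⦃I J : Finset α⦄, Indep J → I ⊆ J → Indep I
  indep_aug : ∀ ⦃I J : Finset α⦄, Indep I → Indep J → I.card < J.card →
    ∃ s ∈ J \ I, Indep (insert s I)

/-!
Measure a set `U` by its *excess* `∑ᵢ (|row i of U| - 1)⁺`. Every bad profile has excess exactly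
`4`, and conversely a set of excess at least `4` contains a bad set: keep only some of its rows
of size `3` (excess `2` each) and `2` (excess `1` each). Hence the faces of `Δₙ` are exactly the
sets of excess at most `3`. Such a set is one element from each nonempty row plus at most `3`
further elements, which is the union decomposition. Since `|U|` is the number of nonempty rows
plus the excess, the augmentation axiom follows by adding an element of a new row (or any
element when the excess is below `3`), and every facet has `n` nonempty rows and excess `3`.
-/

section DeltaComplex

variable {n : ℕ}

lemma profileOf_mono {U V : Finset (Fin n × Fin 3)} (h : U ⊆ V) (i : Fin n) :
    profileOf U i ≤ profileOf V i :=
  card_le_card (filter_subset_filter _ h)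

lemma profileOf_le_three (U : Finset (Fin n × Fin 3)) (i : Fin n) : profileOf U i ≤ 3 :=
  card_le_card_of_injOn Prod.snd (fun _ _ => mem_univ _)
    (fun _ hp _ hq h => Prod.ext ((mem_filter.mp hp).2.trans (mem_filter.mp hq).2.symm) h)

lemma profileOf_eq_zero_iff {U : Finset (Fin n × Fin 3)} {i : Fin n} :
    profileOf U i = 0 ↔ i ∉ U.image Prod.fst := by
  simp only [profileOf, card_eq_zero, filter_eq_empty_iff, mem_image]
  exact ⟨fun h ⟨p, hp, hpi⟩ => h hp hpi, fun h p hp hpi => h ⟨p, hp, hpi⟩⟩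

lemma profileOf_insert {U : Finset (Fin n × Fin 3)} {s : Fin n × Fin 3} (hs : s ∉ U)
    (i : Fin n) : profileOf (insert s U) i = profileOf U i + if s.1 = i then 1 else 0 := by
  unfold profileOf
  rw [filter_insert]
  split_ifs <;> simp [card_insert_of_notMem, hs]

lemma profileOf_filter_fst_mem (U : Finset (Fin n × Fin 3)) (S : Finset (Fin n)) (i : Fin n) :
    profileOf (U.filter (·.1 ∈ S)) i = if i ∈ S then profileOf U i else 0 := by
  unfold profileOf
  rw [filter_filter]
  split_ifs with hi
  · exact congrArg card (filter_congr fun p _ => ⟨And.right, fun h => ⟨h ▸ hi, h⟩⟩)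
  · exact card_eq_zero.mpr (filter_eq_empty_iff.mpr fun p _ h => hi (h.2 ▸ h.1))

/-- Truncated subtraction: an empty row contributes `0`. -/
def excessOf (U : Finset (Fin n × Fin 3)) : ℕ := ∑ i, (profileOf U i - 1)

lemma excessOf_mono {U V : Finset (Fin n × Fin 3)} (h : U ⊆ V) : excessOf U ≤ excessOf V :=
  sum_le_sum fun i _ => Nat.sub_le_sub_right (profileOf_mono h i) 1

lemma card_eq_card_image_fst_add_excessOf (U : Finset (Fin n × Fin 3)) :
    U.card = (U.image Prod.fst).card + excessOf U := by
  have hout : ∀ i ∈ univ, i ∉ U.image Prod.fst → profileOf U i - 1 = 0 := fun i _ hi => by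
    rw [profileOf_eq_zero_iff.mpr hi]
  rw [card_eq_sum_card_image Prod.fst U, excessOf, ← sum_subset (subset_univ _) hout,
    card_eq_sum_ones, ← sum_add_distrib]
  refine sum_congr rfl fun i hi => ?_
  have : profileOf U i ≠ 0 := profileOf_eq_zero_iff.not_left.mpr hi
  change profileOf U i = 1 + (profileOf U i - 1)
  omega

lemma excessOf_insert_le {U : Finset (Fin n × Fin 3)} {s : Fin n × Fin 3} (hs : s ∉ U) :
    excessOf (insert s U) ≤ excessOf U + 1 :=
  calc ∑ i, (profileOf (insert s U) i - 1)
      ≤ ∑ i, ((profileOf U i - 1) + if s.1 = i then 1 else 0) :=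
        sum_le_sum fun i _ => by rw [profileOf_insert hs]; split_ifs <;> omega
    _ = excessOf U + 1 := by simp [sum_add_distrib, excessOf]

lemma excessOf_insert_of_fst_notMem {U : Finset (Fin n × Fin 3)} {s : Fin n × Fin 3}
    (h : s.1 ∉ U.image Prod.fst) : excessOf (insert s U) = excessOf U := by
  have hs : s ∉ U := fun hs => h (mem_image_of_mem _ hs)
  have h0 := profileOf_eq_zero_iff.mpr h
  refine sum_congr rfl fun i _ => ?_
  rw [profileOf_insert hs]
  split_ifs with hi
  · subst hi; omega
  · rfl

lemma excessOf_eq_zero {B : Finset (Fin n × Fin 3)} (hB : ∀ i, profileOf B i ≤ 1) :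
    excessOf B = 0 :=
  sum_eq_zero fun i _ => Nat.sub_eq_zero_of_le (hB i)

lemma excessOf_union_le {B : Finset (Fin n × Fin 3)} (hB : ∀ i, profileOf B i ≤ 1)
    (C : Finset (Fin n × Fin 3)) : excessOf (B ∪ C) ≤ C.card := by
  rw [card_eq_sum_card_fiberwise fun p _ => mem_univ p.1]
  refine sum_le_sum fun i _ => ?_
  have hunion : profileOf (B ∪ C) i ≤ profileOf B i + profileOf C i := by
    unfold profileOf
    rw [filter_union]
    exact card_union_le _ _
  have := hB i
  unfold profileOf at *
  omega

lemma four_le_sum_of_isBadProfile {c : Fin n → ℕ} (h : IsBadProfile c) : 4 ≤ ∑ i, (c i - 1) := by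
  rcases h with ⟨i, j, hij, hi, hj, -⟩ | ⟨i, j, k, hij, hik, hjk, hi, hj, hk, -⟩ |
    ⟨i, j, k, l, hij, hik, hil, hjk, hjl, hkl, hi, hj, hk, hl, -⟩
  · calc 4 = ∑ m ∈ {i, j}, (c m - 1) := by rw [sum_pair hij, hi, hj]
      _ ≤ _ := sum_le_sum_of_subset (subset_univ _)
  · calc 4 = ∑ m ∈ {i, j, k}, (c m - 1) := by
          rw [sum_insert (by simp [hij, hik]), sum_pair hjk, hi, hj, hk]
          rfl
      _ ≤ _ := sum_le_sum_of_subset (subset_univ _)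
  · calc 4 = ∑ m ∈ {i, j, k, l}, (c m - 1) := by
          rw [sum_insert (by simp [hij, hik, hil]), sum_insert (by simp [hjk, hjl]),
            sum_pair hkl, hi, hj, hk, hl]
          rfl
      _ ≤ _ := sum_le_sum_of_subset (subset_univ _)

lemma excessOf_eq_two_mul_card_add_card (U : Finset (Fin n × Fin 3)) :
    excessOf U = 2 * #{i | profileOf U i = 3} + #{i | profileOf U i = 2} := by
  rw [card_filter, card_filter, mul_sum, ← sum_add_distrib]
  refine sum_congr rfl fun i _ => ?_
  have := profileOf_le_three U i
  split_ifs <;> omega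

lemma exists_subset_isBadProfile {U : Finset (Fin n × Fin 3)} (hU : 4 ≤ excessOf U) :
    ∃ W ⊆ U, IsBadProfile (profileOf W) := by
  set T : Finset (Fin n) := {i | profileOf U i = 3}
  set D : Finset (Fin n) := {i | profileOf U i = 2}
  have hTD : 4 ≤ 2 * #T + #D := excessOf_eq_two_mul_card_add_card U ▸ hU
  have hT : ∀ i ∈ T, profileOf U i = 3 := fun i hi => (mem_filter.mp hi).2
  have hD : ∀ i ∈ D, profileOf U i = 2 := fun i hi => (mem_filter.mp hi).2
  suffices ∃ S : Finset (Fin n), IsBadProfile fun i => if i ∈ S then profileOf U i else 0 by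
    obtain ⟨S, hS⟩ := this
    refine ⟨U.filter (·.1 ∈ S), filter_subset _ _, ?_⟩
    convert hS using 1
    exact funext (profileOf_filter_fst_mem U S)
  obtain hT2 | hT1 | hT0 : 2 ≤ #T ∨ #T = 1 ∨ #T = 0 := by omega
  · obtain ⟨S, hST, hS⟩ := exists_subset_card_eq hT2
    obtain ⟨i, j, hij, rfl⟩ := card_eq_two.mp hS
    refine ⟨{i, j}, Or.inl ⟨i, j, hij, ?_, ?_, fun k hki hkj => by simp [hki, hkj]⟩⟩
    all_goals simp only [mem_insert, mem_singleton, true_or, or_true, if_true]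
    all_goals exact hT _ (hST (by simp))
  · obtain ⟨i, hTi⟩ := card_eq_one.mp hT1
    obtain ⟨S, hSD, hS⟩ := exists_subset_card_eq (show 2 ≤ #D by omega)
    obtain ⟨j, k, hjk, rfl⟩ := card_eq_two.mp hS
    have hi := hT i (by simp [hTi])
    have hj := hD j (hSD (by simp))
    have hk := hD k (hSD (by simp))
    have hij : i ≠ j := by rintro rfl; omega
    have hik : i ≠ k := by rintro rfl; omega
    refine ⟨{i, j, k}, Or.inr (Or.inl ⟨i, j, k, hij, hik, hjk, ?_, ?_, ?_,
      fun l hli hlj hlk => by simp [hli, hlj, hlk]⟩)⟩ <;> simpa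
  · obtain ⟨S, hSD, hS⟩ := exists_subset_card_eq (show 4 ≤ #D by omega)
    obtain ⟨i, S', hi, rfl, hS'⟩ := card_eq_succ.mp hS
    obtain ⟨j, k, l, hjk, hjl, hkl, rfl⟩ := card_eq_three.mp hS'
    simp only [mem_insert, mem_singleton, not_or] at hi
    refine ⟨{i, j, k, l}, Or.inr (Or.inr ⟨i, j, k, l, hi.1, hi.2.1, hi.2.2, hjk, hjl, hkl,
      ?_, ?_, ?_, ?_, fun m hmi hmj hmk hml => by simp [hmi, hmj, hmk, hml]⟩)⟩
    all_goals simp only [mem_insert, mem_singleton, true_or, or_true, if_true]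
    all_goals exact hD _ (hSD (by simp))

lemma isFaceD_iff_excessOf_le {U : Finset (Fin n × Fin 3)} : IsFaceD n U ↔ excessOf U ≤ 3 := by
  refine ⟨fun hU => ?_, fun hU ⟨W, hWU, hW⟩ => ?_⟩
  · by_contra! h
    exact hU (exists_subset_isBadProfile h)
  · have := four_le_sum_of_isBadProfile hW
    have := excessOf_mono hWU
    unfold excessOf at *
    omega

def rowMinima (U : Finset (Fin n × Fin 3)) : Finset (Fin n × Fin 3) :=
  U.filter fun p => ∀ q ∈ U, q.1 = p.1 → p.2 ≤ q.2

lemma rowMinima_subset (U : Finset (Fin n × Fin 3)) : rowMinima U ⊆ U :=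
  filter_subset _ _

lemma profileOf_rowMinima_le_one (U : Finset (Fin n × Fin 3)) (i : Fin n) :
    profileOf (rowMinima U) i ≤ 1 := by
  refine card_le_one.mpr fun p hp q hq => ?_
  simp only [rowMinima, mem_filter] at hp hq
  have hpq : p.1 = q.1 := hp.2.trans hq.2.symm
  exact Prod.ext hpq (le_antisymm (hp.1.2 q hq.1.1 hpq.symm) (hq.1.2 p hp.1.1 hpq))

lemma image_fst_rowMinima (U : Finset (Fin n × Fin 3)) :
    (rowMinima U).image Prod.fst = U.image Prod.fst := by
  refine (image_subset_image (rowMinima_subset U)).antisymm fun i hi => ?_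
  obtain ⟨p, hp, hpi⟩ := mem_image.mp hi
  obtain ⟨q, hq, hqmin⟩ :=
    exists_min_image (U.filter (·.1 = i)) Prod.snd ⟨p, mem_filter.mpr ⟨hp, hpi⟩⟩
  obtain ⟨hqU, hqi⟩ := mem_filter.mp hq
  refine mem_image.mpr ⟨q, mem_filter.mpr ⟨hqU, fun r hr hrq => ?_⟩, hqi⟩
  exact hqmin r (mem_filter.mpr ⟨hr, hrq.trans hqi⟩)

lemma card_sdiff_rowMinima (U : Finset (Fin n × Fin 3)) :
    (U \ rowMinima U).card = excessOf U := by
  have hB := card_eq_card_image_fst_add_excessOf (rowMinima U)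
  rw [excessOf_eq_zero (profileOf_rowMinima_le_one U), image_fst_rowMinima] at hB
  rw [card_sdiff_of_subset (rowMinima_subset U), card_eq_card_image_fst_add_excessOf U, hB]
  omega

lemma excessOf_le_three_iff {U : Finset (Fin n × Fin 3)} :
    excessOf U ≤ 3 ↔ ∃ B C : Finset (Fin n × Fin 3), U = B ∪ C ∧
      (∀ i, profileOf B i ≤ 1) ∧ C.card ≤ 3 := by
  refine ⟨fun hU => ?_, fun ⟨B, C, hU, hB, hC⟩ => hU ▸ (excessOf_union_le hB C).trans hC⟩
  exact ⟨rowMinima U, U \ rowMinima U, (union_sdiff_of_subset (rowMinima_subset U)).symm,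
    profileOf_rowMinima_le_one U, (card_sdiff_rowMinima U).trans_le hU⟩

lemma exists_insert_excessOf_le {I J : Finset (Fin n × Fin 3)} (hI : excessOf I ≤ 3)
    (hJ : excessOf J ≤ 3) (hIJ : I.card < J.card) :
    ∃ s ∈ J \ I, excessOf (insert s I) ≤ 3 := by
  by_cases hI2 : excessOf I ≤ 2
  · obtain ⟨s, hsJ, hsI⟩ := exists_mem_notMem_of_card_lt_card hIJ
    exact ⟨s, mem_sdiff.mpr ⟨hsJ, hsI⟩, (excessOf_insert_le hsI).trans (by omega)⟩
  · have hrows : ¬ J.image Prod.fst ⊆ I.image Prod.fst := fun hsub => by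
      have := card_le_card hsub
      rw [card_eq_card_image_fst_add_excessOf I, card_eq_card_image_fst_add_excessOf J] at hIJ
      omega
    obtain ⟨_, hsJ, hsI⟩ := not_subset.mp hrows
    obtain ⟨s, hs, rfl⟩ := mem_image.mp hsJ
    exact ⟨s, mem_sdiff.mpr ⟨hs, fun h => hsI (mem_image_of_mem _ h)⟩,
      (excessOf_insert_of_fst_notMem hsI).trans_le hI⟩

def deltaMatroid (n : ℕ) : FinMatroid (Fin n × Fin 3) where
  Indep U := excessOf U ≤ 3
  indep_empty := by simp [excessOf, profileOf]
  indep_subset _ _ hJ hIJ := (excessOf_mono hIJ).trans hJ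
  indep_aug _ _ hI hJ hIJ := exists_insert_excessOf_le hI hJ hIJ

lemma card_eq_of_isFacetD (hn : 2 ≤ n) {U : Finset (Fin n × Fin 3)} (hU : IsFacetD n U) :
    U.card = n + 3 := by
  obtain ⟨hface, hmax⟩ := hU
  rw [isFaceD_iff_excessOf_le] at hface
  have hfull : ∀ p ∉ U, 3 < excessOf (insert p U) := fun p hp => by
    by_contra! h
    exact hp (hmax _ (isFaceD_iff_excessOf_le.mpr h) (subset_insert p U) ▸ mem_insert_self p U)
  have hrows : U.image Prod.fst = univ := by
    by_contra! h
    obtain ⟨i, hi⟩ := not_forall.mp (mt eq_univ_iff_forall.mpr h)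
    have := hfull (i, 0) fun h => hi (mem_image_of_mem Prod.fst h)
    rw [excessOf_insert_of_fst_notMem hi] at this
    omega
  have hcard := card_eq_card_image_fst_add_excessOf U
  rw [hrows, card_univ, Fintype.card_fin] at hcard
  suffices excessOf U = 3 by omega
  by_contra h
  have hlt : U.card < (univ : Finset (Fin n × Fin 3)).card := by
    rw [card_univ, Fintype.card_prod, Fintype.card_fin, Fintype.card_fin]
    omega
  obtain ⟨p, -, hp⟩ := exists_mem_notMem_of_card_lt_card hlt
  have := (hfull p hp).trans_le (excessOf_insert_le hp)
  omega

end DeltaComplex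

/-- `U` is a face of `Δₙ` iff `U = B ∪ C` where `B` contains at most one element
`x_{ij}` per index `i` (independent in `U_{1,3}^{⊕n}`) and `C` has at most `3`
elements (independent in `U_{3,3n}`).  Consequently `Δₙ` is a matroid of rank
`n + 3`, namely the matroid union `U_{3,3n} ∨ U_{1,3}^{⊕n}`. -/
theorem Delta_n_is_matroid_union (n : ℕ) (hn : 4 ≤ n) :
    (∀ U : Finset (Fin n × Fin 3), IsFaceD n U ↔
      ∃ B C : Finset (Fin n × Fin 3), U = B ∪ C ∧
        (∀ i : Fin n, (B.filter (fun p => p.1 = i)).card ≤ 1) ∧ C.card ≤ 3) ∧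
    (∃ M : FinMatroid (Fin n × Fin 3),
      (∀ U, M.Indep U ↔ IsFaceD n U) ∧
      (∀ U : Finset (Fin n × Fin 3), IsFacetD n U → U.card = n + 3)) :=
  ⟨fun _ => isFaceD_iff_excessOf_le.trans excessOf_le_three_iff,
    deltaMatroid n, fun _ => isFaceD_iff_excessOf_le.symm,
    fun _ => card_eq_of_isFacetD (by omega)⟩
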